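/- arXiv:1107.1381 — 2 statements merged into one kernel-verified Lean document; each statement's English description precedes it below -/
import Mathlib

section
/- Let m ≥ 2 and r ≥ 4 be integers, and let a : 𝒫(m) → ℕ be a function on the nonempty subsets of [m] such that Σ_S a_S ≤ r and Σ_{S ∋ j} a_S ≥ 2 for every j ∈ [m]. Then Σ_{S ∈ 𝒫(m)} C(a_S, 2) + Σ_{{S,T} ∈ 𝒥} a_S·a_T ≤ λ(r)·(Σ_{S ∈ 𝒫(m)} a_S·|S| − 2m) + m, where 𝒥 is the set of unordered pairs {S,T} of distinct nonempty subsets of [m] with S ∩ T ≠ ∅. -/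
/-!
Write `d j = Σ_{S ∋ j} a S` for the weighted degrees. Double counting gives `Σ_j d j = Σ_S a S |S|`
and `Σ_j (d j)² = Σ_{S,T} |S ∩ T| a S a T`; as every set is nonempty and two intersecting sets
share at least one point, the left-hand side is at most `Σ_j C(d j, 2)`. If every degree is below
`r`, summing `C(d, 2) ≤ λ(r)(d - 2) + 1` (valid for `2 ≤ d < r`) gives the bound. Otherwise some
degree is at least `r`; the left-hand side is then at most `C(Σ_S a S, 2) ≤ C(r, 2) = λ(r)(r - 2) + 2`,
while `Σ_j d j - 2m ≥ r - 2` because the remaining `m - 1` degrees are at least `2`.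
-/

/-- `λ(r) = (C(r,2) - 2)/(r - 2)`. -/
noncomputable def lam (r : ℕ) : ℝ := ((r.choose 2 : ℝ) - 2) / ((r : ℝ) - 2)

open Finset

theorem two_mul_choose_two_add_self (n : ℕ) : 2 * n.choose 2 + n = n ^ 2 := by
  rw [Nat.choose_two_right, Nat.mul_div_cancel' (Nat.even_mul_pred_self n).two_dvd]
  cases n <;> simp [sq, Nat.mul_succ]

theorem two_mul_sum_choose_two_add_sum {ι : Type*} (s : Finset ι) (f : ι → ℕ) :
    2 * ∑ i ∈ s, (f i).choose 2 + ∑ i ∈ s, f i = ∑ i ∈ s, f i ^ 2 := by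
  simp only [mul_sum, ← sum_add_distrib, two_mul_choose_two_add_self]

theorem sq_add_mul_le_mul_sq_add (a k : ℕ) (hk : 1 ≤ k) : a ^ 2 + a * k ≤ k * a ^ 2 + a := by
  obtain ⟨k, rfl⟩ := Nat.exists_eq_add_of_le' hk
  have : a * k ≤ k * a ^ 2 := by
    rw [mul_comm]; exact Nat.mul_le_mul_left k (Nat.le_self_pow two_ne_zero a)
  linarith

theorem half_le_lam {r : ℕ} (hr : 4 ≤ r) : (r : ℝ) / 2 ≤ lam r := by
  have hr' : (4 : ℝ) ≤ r := by exact_mod_cast hr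
  rw [lam, le_div_iff₀ (by linarith), Nat.cast_choose_two]
  nlinarith

theorem lam_mul_sub_two {r : ℕ} (hr : r ≠ 2) : lam r * ((r : ℝ) - 2) = r.choose 2 - 2 :=
  div_mul_cancel₀ _ (sub_ne_zero.mpr (by exact_mod_cast hr))

-- `C(d,2) - 1 = (d - 2)(d + 1)/2` and `d + 1 ≤ r ≤ 2 λ(r)`.
theorem choose_two_le_lam {r d : ℕ} (hr : 4 ≤ r) (hd : 2 ≤ d) (hdr : d < r) :
    (d.choose 2 : ℝ) ≤ lam r * ((d : ℝ) - 2) + 1 := by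
  have hd' : (2 : ℝ) ≤ d := by exact_mod_cast hd
  have hdr' : (d : ℝ) + 1 ≤ r := by exact_mod_cast hdr
  have := mul_le_mul_of_nonneg_left (half_le_lam hr) (sub_nonneg.mpr hd')
  rw [Nat.cast_choose_two]
  nlinarith

section WeightedFamily

variable {α : Type*} [DecidableEq α] (P : Finset (Finset α)) (a : Finset α → ℕ)

def weightedDegree (j : α) : ℕ := ∑ S ∈ P with j ∈ S, a S

def intersectingPairSum : ℕ := ∑ S ∈ P, ∑ T ∈ P with T ≠ S ∧ (S ∩ T).Nonempty, a S * a T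

theorem sum_weightedDegree [Fintype α] : ∑ j, weightedDegree P a j = ∑ S ∈ P, a S * #S := by
  simp only [weightedDegree, sum_filter]
  rw [sum_comm]
  refine sum_congr rfl fun S _ => ?_
  rw [sum_ite_mem, univ_inter, sum_const, smul_eq_mul, mul_comm]

theorem sum_weightedDegree_sq [Fintype α] :
    ∑ j, weightedDegree P a j ^ 2 = ∑ S ∈ P, ∑ T ∈ P, #(S ∩ T) * (a S * a T) := by
  simp only [weightedDegree, sq, sum_mul_sum, sum_filter, ite_mul, mul_ite, zero_mul, mul_zero]
  rw [sum_comm]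
  refine sum_congr rfl fun S _ => ?_
  rw [sum_comm]
  refine sum_congr rfl fun T _ => ?_
  simp only [← ite_and, ← mem_inter]
  rw [sum_ite_mem, univ_inter, sum_const, smul_eq_mul, inter_comm]

theorem intersectingPairSum_le (w : Finset α → Finset α → ℕ)
    (hw : ∀ S T, (S ∩ T).Nonempty → 1 ≤ w S T) :
    intersectingPairSum P a ≤ ∑ S ∈ P, ∑ T ∈ P.erase S, w S T * (a S * a T) := by
  refine sum_le_sum fun S _ => ?_
  calc ∑ T ∈ P with T ≠ S ∧ (S ∩ T).Nonempty, a S * a T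
      ≤ ∑ T ∈ P with T ≠ S ∧ (S ∩ T).Nonempty, w S T * (a S * a T) :=
        sum_le_sum fun T hT => Nat.le_mul_of_pos_left _ (hw S T (mem_filter.mp hT).2.2)
    _ ≤ ∑ T ∈ P.erase S, w S T * (a S * a T) :=
        sum_le_sum_of_subset fun T hT => by
          obtain ⟨hTP, hTS, -⟩ := mem_filter.mp hT
          exact mem_erase.mpr ⟨hTS, hTP⟩

theorem intersectingPairSum_le_choose_two_sum :
    2 * ∑ S ∈ P, (a S).choose 2 + intersectingPairSum P a ≤ 2 * (∑ S ∈ P, a S).choose 2 := by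
  have hpair := intersectingPairSum_le P a (fun _ _ => 1) fun _ _ _ => le_rfl
  have hsq : (∑ S ∈ P, a S) ^ 2 = ∑ S ∈ P, (a S ^ 2 + ∑ T ∈ P.erase S, 1 * (a S * a T)) := by
    rw [sq, sum_mul_sum]
    refine sum_congr rfl fun S hS => ?_
    simp only [← add_sum_erase _ _ hS, sq, one_mul]
  have hS := two_mul_sum_choose_two_add_sum P a
  have hN := two_mul_choose_two_add_self (∑ S ∈ P, a S)
  rw [sum_add_distrib] at hsq
  omega

theorem intersectingPairSum_le_sum_choose_two_weightedDegree [Fintype α]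
    (hP : ∀ S ∈ P, S.Nonempty) :
    2 * ∑ S ∈ P, (a S).choose 2 + intersectingPairSum P a
      ≤ 2 * ∑ j, (weightedDegree P a j).choose 2 := by
  have hpair := intersectingPairSum_le P a (fun S T => #(S ∩ T)) fun _ _ h => h.card_pos
  have hsq : ∑ j, weightedDegree P a j ^ 2
      = ∑ S ∈ P, (#S * a S ^ 2 + ∑ T ∈ P.erase S, #(S ∩ T) * (a S * a T)) := by
    rw [sum_weightedDegree_sq]
    refine sum_congr rfl fun S hS => ?_
    rw [← add_sum_erase _ _ hS, inter_self, sq]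
  have hdiag : ∑ S ∈ P, (a S ^ 2 + a S * #S) ≤ ∑ S ∈ P, (#S * a S ^ 2 + a S) :=
    sum_le_sum fun S hS => sq_add_mul_le_mul_sq_add _ _ (hP S hS).card_pos
  have hA := two_mul_sum_choose_two_add_sum P a
  have hd := two_mul_sum_choose_two_add_sum univ (weightedDegree P a)
  rw [sum_weightedDegree] at hd
  simp only [sum_add_distrib] at hsq hdiag
  omega

end WeightedFamily

section DegreeSequence

variable {α : Type*} [Fintype α] {r : ℕ} {d : α → ℕ}

theorem sum_choose_two_le_lam (hr : 4 ≤ r) (hd : ∀ j, 2 ≤ d j) (hdr : ∀ j, d j < r) :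
    ∑ j, ((d j).choose 2 : ℝ) ≤ lam r * (∑ j, (d j : ℝ) - 2 * Fintype.card α) + Fintype.card α :=
  calc ∑ j, ((d j).choose 2 : ℝ)
      ≤ ∑ j, (lam r * ((d j : ℝ) - 2) + 1) :=
        sum_le_sum fun j _ => choose_two_le_lam hr (hd j) (hdr j)
    _ = lam r * (∑ j, (d j : ℝ) - 2 * Fintype.card α) + Fintype.card α := by
        simp only [sum_add_distrib, ← mul_sum, sum_sub_distrib, sum_const, card_univ,
          nsmul_eq_mul]
        ring

theorem choose_two_le_lam_of_le (hr : 4 ≤ r) (hα : 2 ≤ Fintype.card α) (hd : ∀ j, 2 ≤ d j)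
    {j₀ : α} (hj₀ : r ≤ d j₀) :
    (r.choose 2 : ℝ) ≤ lam r * (∑ j, (d j : ℝ) - 2 * Fintype.card α) + Fintype.card α := by
  classical
  have hrest : 2 * (Fintype.card α - 1) ≤ ∑ j ∈ univ.erase j₀, d j := by
    simpa [mul_comm] using card_nsmul_le_sum (univ.erase j₀) d 2 fun j _ => hd j
  have hsum : r + 2 * Fintype.card α ≤ ∑ j, d j + 2 := by
    rw [← add_sum_erase _ _ (mem_univ j₀)]
    omega
  have hsum' : (r : ℝ) + 2 * Fintype.card α ≤ ∑ j, (d j : ℝ) + 2 := by exact_mod_cast hsum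
  have hα' : (2 : ℝ) ≤ Fintype.card α := by exact_mod_cast hα
  have hlam : 0 ≤ lam r := le_trans (by positivity) (half_le_lam hr)
  calc (r.choose 2 : ℝ) = lam r * ((r : ℝ) - 2) + 2 := by rw [lam_mul_sub_two (by omega)]; ring
    _ ≤ lam r * (∑ j, (d j : ℝ) - 2 * Fintype.card α) + Fintype.card α :=
        add_le_add (mul_le_mul_of_nonneg_left (by linarith) hlam) hα'

end DegreeSequence

/-- **Lemma 12.** Let `m ≥ 2`, `r ≥ 4`, and let `a : 𝒫(m) → ℕ` (on the nonempty subsets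
`P` of `[m]`) satisfy `Σ_S a_S ≤ r` and `Σ_{S ∋ j} a_S ≥ 2` for every `j ∈ [m]`. Then
`Σ_S C(a_S,2) + Σ_{{S,T} ∈ 𝒥} a_S a_T ≤ λ(r)(Σ_S a_S |S| - 2m) + m`, where `𝒥` consists of
the unordered pairs of distinct intersecting nonempty sets (the sum over unordered pairs is
written as half the sum over ordered pairs). -/
theorem weighted_double_cover_bound (m r : ℕ) (hm : 2 ≤ m) (hr : 4 ≤ r)
    (a : Finset (Fin m) → ℕ) (P : Finset (Finset (Fin m)))
    (hP : P = Finset.univ.filter (fun S : Finset (Fin m) => S.Nonempty))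
    (htotal : ∑ S ∈ P, a S ≤ r)
    (hcover : ∀ j : Fin m, 2 ≤ ∑ S ∈ P.filter (fun S => j ∈ S), a S) :
    (∑ S ∈ P, ((a S).choose 2 : ℝ)) +
      (1 / 2) * ∑ S ∈ P, ∑ T ∈ P.filter (fun T => T ≠ S ∧ (S ∩ T).Nonempty),
        (a S : ℝ) * (a T : ℝ)
      ≤ lam r * ((∑ S ∈ P, (a S : ℝ) * (S.card : ℝ)) - 2 * m) + m := by
  have hne : ∀ S ∈ P, S.Nonempty := fun S hS => by simpa [hP] using hS
  set d := weightedDegree P a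
  have hd : ∀ j, 2 ≤ d j := hcover
  have hW : ∑ S ∈ P, (a S : ℝ) * (S.card : ℝ) = ∑ j, (d j : ℝ) := by
    exact_mod_cast (sum_weightedDegree P a).symm
  suffices h : ((2 * ∑ S ∈ P, (a S).choose 2 + intersectingPairSum P a : ℕ) : ℝ)
      ≤ 2 * (lam r * (∑ j, (d j : ℝ) - 2 * Fintype.card (Fin m)) + Fintype.card (Fin m)) by
    rw [hW]
    push_cast [intersectingPairSum, Fintype.card_fin] at h
    linarith
  by_cases hbig : ∃ j, r ≤ d j
  · obtain ⟨j₀, hj₀⟩ := hbig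
    have hle : 2 * ∑ S ∈ P, (a S).choose 2 + intersectingPairSum P a ≤ 2 * r.choose 2 :=
      (intersectingPairSum_le_choose_two_sum P a).trans
        (Nat.mul_le_mul_left 2 (Nat.choose_le_choose 2 htotal))
    have := choose_two_le_lam_of_le hr (by simpa using hm) hd hj₀
    calc _ ≤ ((2 * r.choose 2 : ℕ) : ℝ) := by exact_mod_cast hle
      _ ≤ _ := by push_cast; linarith
  · simp only [not_exists, not_le] at hbig
    have hle := intersectingPairSum_le_sum_choose_two_weightedDegree P a hne
    have := sum_choose_two_le_lam hr hd hbig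
    calc _ ≤ ((2 * ∑ j, (d j).choose 2 : ℕ) : ℝ) := by exact_mod_cast hle
      _ ≤ _ := by push_cast; linarith
end

section
/- Let G be a graph on vertex set [n] whose K_4-bootstrap closure is the complete graph K_n, and let 1 ≤ L ≤ n. Then there exists a subset A ⊆ [n] with L ≤ |A| ≤ 3L such that the K_4-bootstrap closure of the edges of G inside A (computed in the complete graph on A) is the complete graph on A. -/
open Finset

/-- The edge set of the copy of `H` under the injection `f`. -/
def copyEdges {W V : Type*} (H : SimpleGraph W) (f : W ↪ V) : Set (Sym2 V) :=
  Sym2.map f '' H.edgeSet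

/-- One step of the `H`-bootstrap process: infect every edge `e` for which some copy of `H`
contains `e` and has all its other edges already infected. -/
def bootStep {W V : Type*} (H : SimpleGraph W) (E : Set (Sym2 V)) : Set (Sym2 V) :=
  E ∪ {e | ∃ f : W ↪ V, e ∈ copyEdges H f ∧ copyEdges H f ⊆ insert e E}

/-- The closure of `E` under the `H`-bootstrap process. -/
def bootClosure {W V : Type*} (H : SimpleGraph W) (E : Set (Sym2 V)) : Set (Sym2 V) :=
  ⋃ t, (bootStep H)^[t] E

/-- `E` percolates in the `H`-bootstrap process on the complete graph on `V`. -/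
def Percolates {W V : Type*} (H : SimpleGraph W) (E : Set (Sym2 V)) : Prop :=
  bootClosure H E = (⊤ : SimpleGraph V).edgeSet

/-- The expectation of `X` under the Erdős–Rényi random graph `G_{n,p}`,
written as a sum over all graphs on `[n]`, weighted by their probabilities. -/
noncomputable def gnpExp (n : ℕ) (p : ℝ) (X : Finset (Sym2 (Fin n)) → ℝ) : ℝ :=
  ∑ E ∈ (⊤ : SimpleGraph (Fin n)).edgeFinset.powerset,
    p ^ E.card * (1 - p) ^ ((⊤ : SimpleGraph (Fin n)).edgeFinset.card - E.card) * X E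

/- probability of event `A` under `G_{n,p}` -/
open Classical in
noncomputable def gnpProb (n : ℕ) (p : ℝ) (A : Finset (Sym2 (Fin n)) → Prop) : ℝ :=
  gnpExp n p (fun E => if A E then 1 else 0)

/-- The critical probability for `H`-bootstrap percolation on `K_n`. -/
noncomputable def pc {W : Type*} (n : ℕ) (H : SimpleGraph W) : ℝ :=
  sInf {p : ℝ | p ∈ Set.Icc (0 : ℝ) 1 ∧
    1 / 2 ≤ gnpProb n p (fun E => Percolates H (↑E : Set (Sym2 (Fin n))))}

/-- The complete graph on `A ⊆ V` is internally spanned by the edge set `E`: the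
`K_4`-bootstrap closure, computed inside the complete graph on `A`, of the set of edges
of `E` lying inside `A`, is the complete graph on `A`. -/
def IntSpanned {V : Type*} (E : Set (Sym2 V)) (A : Set V) : Prop :=
  bootClosure (SimpleGraph.completeGraph (Fin 4))
      {e : Sym2 A | Sym2.map (Subtype.val : A → V) e ∈ E} =
    (⊤ : SimpleGraph A).edgeSet

/-!
Every edge added by the `K₄`-process lies in a vertex set built from single edges of `G` by two
kinds of merges: two sets sharing two vertices, or three sets pairwise sharing a vertex, with
the three shared vertices distinct. The `K₄`-closure of a graph is closed under completing
`K₄`s, so both merges preserve being internally spanned. If `G` percolates, the whole vertex set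
arises this way. A set of more than `3L` vertices merged from at most three parts has a part
of at least `L` vertices, so walking down its merge tree, always into such a part, reaches a set
of between `L` and `3L` vertices.
-/

open SimpleGraph

notation "K₄" => completeGraph (Fin 4)

section BootstrapClosure

variable {W V : Type*} {H : SimpleGraph W} {E S : Set (Sym2 V)}

theorem subset_bootStep : E ⊆ bootStep H E := Set.subset_union_left

theorem bootStep_mono (h : E ⊆ S) : bootStep H E ⊆ bootStep H S := by
  rintro e (he | ⟨f, hef, hsub⟩)
  · exact Or.inl (h he)
  · exact Or.inr ⟨f, hef, hsub.trans (Set.insert_subset_insert h)⟩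

theorem subset_bootClosure : E ⊆ bootClosure H E :=
  Set.subset_iUnion (fun t => (bootStep H)^[t] E) 0

theorem bootClosure_subset (hE : E ⊆ S) (hS : bootStep H S ⊆ S) : bootClosure H E ⊆ S := by
  refine Set.iUnion_subset fun t => ?_
  induction t with
  | zero => exact hE
  | succ t ih =>
    rw [Function.iterate_succ_apply']
    exact (bootStep_mono ih).trans hS

theorem bootStep_bootClosure_subset [Finite W] :
    bootStep H (bootClosure H E) ⊆ bootClosure H E := by
  rintro e (he | ⟨f, hef, hsub⟩)
  · exact he
  have hdir : Directed (· ⊆ ·) fun t => (bootStep H)^[t] E :=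
    Monotone.directed_le fun _ _ hst =>
      Function.monotone_iterate_of_id_le (fun _ => subset_bootStep) hst E
  -- the finitely many other edges of the copy are all present at some finite stage `t`
  obtain ⟨t, ht⟩ := hdir.exists_mem_subset_of_finset_subset_biUnion
    (s := (((Set.toFinite H.edgeSet).image (Sym2.map f)).sdiff (t := {e})).toFinset)
    (by rw [Set.Finite.coe_toFinset, Set.sdiff_singleton_subset_iff]; exact hsub)
  rw [Set.Finite.coe_toFinset] at ht
  refine Set.mem_iUnion.mpr ⟨t + 1, ?_⟩
  rw [Function.iterate_succ_apply']
  exact Or.inr ⟨f, hef, Set.sdiff_singleton_subset_iff.mp ht⟩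

end BootstrapClosure

namespace SimpleGraph

variable {V W : Type*} {G H : SimpleGraph V}

def IsK4Closed (G : SimpleGraph V) : Prop :=
  ∀ ⦃a b c d⦄, a ≠ b → G.Adj a c → G.Adj a d → G.Adj b c → G.Adj b d → G.Adj c d → G.Adj a b

theorem isK4Closed_top : (⊤ : SimpleGraph V).IsK4Closed := fun _ _ _ _ hab _ _ _ _ _ => hab

theorem IsK4Closed.comap {H : SimpleGraph W} (hH : H.IsK4Closed) (f : V ↪ W) :
    (H.comap f).IsK4Closed :=
  fun _ _ _ _ hab hac had hbc hbd hcd => hH (f.injective.ne hab) hac had hbc hbd hcd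

theorem IsK4Closed.isClique_union (hG : G.IsK4Closed) {s t : Set V} {a b : V}
    (hs : G.IsClique s) (ht : G.IsClique t) (hab : a ≠ b) (ha : a ∈ s ∩ t) (hb : b ∈ s ∩ t) :
    G.IsClique (s ∪ t) := by
  suffices key : ∀ x ∈ s, ∀ y ∈ t, x ≠ y → G.Adj x y from
    Set.pairwise_union.mpr
      ⟨hs, ht, fun x hx y hy hxy => ⟨key x hx y hy hxy, (key x hx y hy hxy).symm⟩⟩
  intro x hx y hy hxy
  by_cases hxt : x ∈ t
  · exact ht hxt hy hxy
  by_cases hys : y ∈ s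
  · exact hs hx hys hxy
  have hxa : x ≠ a := fun h => hxt (h ▸ ha.2)
  have hxb : x ≠ b := fun h => hxt (h ▸ hb.2)
  have hya : y ≠ a := fun h => hys (h ▸ ha.1)
  have hyb : y ≠ b := fun h => hys (h ▸ hb.1)
  exact hG hxy (hs hx ha.1 hxa) (hs hx hb.1 hxb) (ht hy ha.2 hya) (ht hy hb.2 hyb)
    (hs ha.1 hb.1 hab)

theorem IsK4Closed.isClique_union_union (hG : G.IsK4Closed) {s t u : Set V} {a b c : V}
    (hs : G.IsClique s) (ht : G.IsClique t) (hu : G.IsClique u)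
    (hab : a ≠ b) (hac : a ≠ c) (hbc : b ≠ c)
    (ha : a ∈ s ∩ t) (hb : b ∈ s ∩ u) (hc : c ∈ t ∩ u) :
    G.IsClique (s ∪ t ∪ u) := by
  have habc : G.IsClique {a, b, c} := by
    simp [isClique_insert, hs ha.1 hb.1 hab, ht ha.2 hc.1 hac, hu hb.2 hc.2 hbc]
  have h₁ := hG.isClique_union hs habc hab ⟨ha.1, by simp⟩ ⟨hb.1, by simp⟩
  have h₂ := hG.isClique_union h₁ ht hac ⟨.inl ha.1, ha.2⟩ ⟨.inr (by simp), hc.1⟩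
  have h₃ := hG.isClique_union h₂ hu hbc ⟨.inl (.inl hb.1), hb.2⟩ ⟨.inl (.inr (by simp)), hc.2⟩
  exact h₃.subset (Set.union_subset_union_left _
    (Set.union_subset_union_left _ Set.subset_union_left))

theorem bootStep_k4_subset_iff_isK4Closed :
    bootStep K₄ G.edgeSet ⊆ G.edgeSet ↔ G.IsK4Closed := by
  constructor
  · intro hG a b c d hab hac had hbc hbd hcd
    have hf : Function.Injective ![a, b, c, d] := by
      intro i j hij
      fin_cases i <;> fin_cases j <;> simp_all [eq_comm, hac.ne, had.ne, hbc.ne, hbd.ne, hcd.ne]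
    refine hG (Or.inr ⟨⟨_, hf⟩, ⟨s(0, 1), by decide, rfl⟩, ?_⟩)
    rintro _ ⟨p, hp, rfl⟩
    induction p using Sym2.ind with
    | _ i j => fin_cases i <;> fin_cases j <;> simp_all [adj_comm]
  · rintro hG e (he | ⟨f, ⟨p, hp, rfl⟩, hsub⟩)
    · exact he
    induction p using Sym2.ind with
    | _ i j =>
    have hij : i ≠ j := hp
    obtain ⟨k, l, hkl, hki, hkj, hli, hlj⟩ :
        ∃ k l : Fin 4, k ≠ l ∧ k ≠ i ∧ k ≠ j ∧ l ≠ i ∧ l ≠ j := by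
      have : ∀ i j : Fin 4, i ≠ j → ∃ k l : Fin 4, k ≠ l ∧ k ≠ i ∧ k ≠ j ∧ l ≠ i ∧ l ≠ j := by
        decide
      exact this i j hij
    have hadj : ∀ x y, x ≠ y → y ≠ i → y ≠ j → G.Adj (f x) (f y) := by
      intro x y hxy hyi hyj
      rcases hsub ⟨s(x, y), hxy, rfl⟩ with h | h
      · rcases Sym2.mem_iff.mp (Sym2.map.injective f.injective h ▸ Sym2.mem_mk_right x y)
          with rfl | rfl
        exacts [absurd rfl hyi, absurd rfl hyj]
      · exact h
    exact hG (f.injective.ne hij) (hadj i k hki.symm hki hkj) (hadj i l hli.symm hli hlj)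
      (hadj j k hkj.symm hki hkj) (hadj j l hlj.symm hli hlj) (hadj k l hkl hli hlj)

def k4Closure (G : SimpleGraph V) : SimpleGraph V := fromEdgeSet (bootClosure K₄ G.edgeSet)

theorem edgeSet_k4Closure : (k4Closure G).edgeSet = bootClosure K₄ G.edgeSet := by
  have hloopless : bootClosure K₄ G.edgeSet ⊆ (⊤ : SimpleGraph V).edgeSet :=
    bootClosure_subset (edgeSet_mono le_top)
      (bootStep_k4_subset_iff_isK4Closed.mpr isK4Closed_top)
  rw [edgeSet_top] at hloopless
  rw [k4Closure, edgeSet_fromEdgeSet]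
  exact sdiff_eq_left.mpr (Set.subset_compl_iff_disjoint_right.mp hloopless)

theorem le_k4Closure : G ≤ k4Closure G := by
  rw [← edgeSet_subset_edgeSet, edgeSet_k4Closure]
  exact subset_bootClosure

theorem isK4Closed_k4Closure : (k4Closure G).IsK4Closed := by
  rw [← bootStep_k4_subset_iff_isK4Closed, edgeSet_k4Closure]
  exact bootStep_bootClosure_subset

theorem k4Closure_le (hGH : G ≤ H) (hH : H.IsK4Closed) : k4Closure G ≤ H := by
  rw [← edgeSet_subset_edgeSet, edgeSet_k4Closure]
  exact bootClosure_subset (edgeSet_mono hGH) (bootStep_k4_subset_iff_isK4Closed.mpr hH)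

theorem k4Closure_comap_le {H : SimpleGraph W} (f : V ↪ W) :
    k4Closure (H.comap f) ≤ (k4Closure H).comap f :=
  k4Closure_le (comap_monotone f le_k4Closure) (isK4Closed_k4Closure.comap f)

theorem percolates_k4_iff_k4Closure_eq_top : Percolates K₄ G.edgeSet ↔ k4Closure G = ⊤ := by
  rw [Percolates, ← edgeSet_k4Closure, edgeSet_inj]

end SimpleGraph

section InternallySpanned

variable {V : Type*} {G : SimpleGraph V}

theorem intSpanned_edgeSet_iff {A : Set V} :
    IntSpanned G.edgeSet A ↔ k4Closure (G.induce A) = ⊤ := by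
  have hinduce : {e : Sym2 A | Sym2.map Subtype.val e ∈ G.edgeSet} = (G.induce A).edgeSet := by
    ext e
    induction e using Sym2.ind
    rfl
  rw [IntSpanned, hinduce, ← percolates_k4_iff_k4Closure_eq_top, Percolates]

theorem intSpanned_of_subsingleton {A : Set V} (hA : A.Subsingleton) :
    IntSpanned G.edgeSet A := by
  rw [intSpanned_edgeSet_iff, eq_top_iff]
  exact fun x y hxy => absurd (Subtype.ext (hA x.2 y.2)) hxy

theorem intSpanned_pair {u v : V} (h : G.Adj u v) : IntSpanned G.edgeSet {u, v} := by
  rw [intSpanned_edgeSet_iff, eq_top_iff]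
  refine le_trans ?_ le_k4Closure
  rintro ⟨x, hx⟩ ⟨y, hy⟩ hxy
  simp only [top_adj, ne_eq, Subtype.mk.injEq, comap_adj, Function.Embedding.subtype_apply]
    at hxy ⊢
  rcases hx with rfl | rfl <;> rcases hy with rfl | rfl
  all_goals first | exact absurd rfl hxy | exact h | exact h.symm

theorem IntSpanned.isClique {A C : Set V} (hA : IntSpanned G.edgeSet A) (hAC : A ⊆ C) :
    (k4Closure (G.induce C)).IsClique (Subtype.val ⁻¹' A) := by
  rw [intSpanned_edgeSet_iff] at hA
  intro x hx y hy hxy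
  let ι := Set.embeddingOfSubset A C hAC
  have htop : (⊤ : SimpleGraph A).Adj ⟨x, hx⟩ ⟨y, hy⟩ :=
    (top_adj _ _).mpr fun h => hxy (Subtype.ext (congrArg (fun z : A => (z : V)) h))
  rw [← hA, show G.induce A = (G.induce C).comap ι from rfl] at htop
  exact k4Closure_comap_le ι htop

theorem IntSpanned.union {A B : Set V} {a b : V} (hA : IntSpanned G.edgeSet A)
    (hB : IntSpanned G.edgeSet B) (hab : a ≠ b) (ha : a ∈ A ∩ B) (hb : b ∈ A ∩ B) :
    IntSpanned G.edgeSet (A ∪ B) := by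
  rw [intSpanned_edgeSet_iff, ← isClique_univ, ← Subtype.coe_preimage_self, Set.preimage_union]
  exact isK4Closed_k4Closure.isClique_union (a := ⟨a, .inl ha.1⟩) (b := ⟨b, .inl hb.1⟩)
    (hA.isClique Set.subset_union_left) (hB.isClique Set.subset_union_right)
    (Subtype.coe_ne_coe.mp hab) ha hb

theorem IntSpanned.union_union {A B C : Set V} {a b c : V} (hA : IntSpanned G.edgeSet A)
    (hB : IntSpanned G.edgeSet B) (hC : IntSpanned G.edgeSet C)
    (hab : a ≠ b) (hac : a ≠ c) (hbc : b ≠ c) (ha : a ∈ A ∩ B) (hb : b ∈ A ∩ C)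
    (hc : c ∈ B ∩ C) :
    IntSpanned G.edgeSet (A ∪ B ∪ C) := by
  rw [intSpanned_edgeSet_iff, ← isClique_univ, ← Subtype.coe_preimage_self, Set.preimage_union,
    Set.preimage_union]
  exact isK4Closed_k4Closure.isClique_union_union
    (a := ⟨a, .inl (.inl ha.1)⟩) (b := ⟨b, .inl (.inl hb.1)⟩) (c := ⟨c, .inl (.inr hc.1)⟩)
    (hA.isClique (Set.subset_union_left.trans Set.subset_union_left))
    (hB.isClique (Set.subset_union_right.trans Set.subset_union_left))
    (hC.isClique Set.subset_union_right)
    (Subtype.coe_ne_coe.mp hab) (Subtype.coe_ne_coe.mp hac) (Subtype.coe_ne_coe.mp hbc) ha hb hc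

end InternallySpanned

section MergeSpanned

open Finset

variable {V : Type*} [DecidableEq V] {G : SimpleGraph V}

/-- The vertex sets of the merge trees of the Aizenman–Lebowitz argument. -/
inductive MergeSpanned (G : SimpleGraph V) : Finset V → Prop
  | edge {u v : V} : G.Adj u v → MergeSpanned G {u, v}
  | union {A B : Finset V} {a b : V} : MergeSpanned G A → MergeSpanned G B →
      a ≠ b → a ∈ A ∩ B → b ∈ A ∩ B → MergeSpanned G (A ∪ B)
  | union_union {A B C : Finset V} {a b c : V} :
      MergeSpanned G A → MergeSpanned G B → MergeSpanned G C → a ≠ b → a ≠ c → b ≠ c →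
      a ∈ A ∩ B → b ∈ A ∩ C → c ∈ B ∩ C → MergeSpanned G (A ∪ B ∪ C)

theorem MergeSpanned.intSpanned {A : Finset V} (hA : MergeSpanned G A) :
    IntSpanned G.edgeSet (A : Set V) := by
  induction hA with
  | edge h => simpa using intSpanned_pair h
  | union _ _ hab ha hb ihA ihB =>
    rw [coe_union]
    exact ihA.union ihB hab (by simpa using ha) (by simpa using hb)
  | union_union _ _ _ hab hac hbc ha hb hc ihA ihB ihC =>
    rw [coe_union, coe_union]
    exact ihA.union_union ihB ihC hab hac hbc (by simpa using ha) (by simpa using hb)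
      (by simpa using hc)

theorem MergeSpanned.exists_le_card_le_three_mul {A : Finset V} (hA : MergeSpanned G A)
    {L : ℕ} (hL : 1 ≤ L) (hLA : L ≤ #A) :
    ∃ B, MergeSpanned G B ∧ L ≤ #B ∧ #B ≤ 3 * L := by
  induction hA with
  | edge h => exact ⟨_, .edge h, hLA, card_le_two.trans (by omega)⟩
  | @union A B a b hA hB hab ha hb ihA ihB =>
    by_cases hsmall : #(A ∪ B) ≤ 3 * L
    · exact ⟨_, .union hA hB hab ha hb, hLA, hsmall⟩
    have := card_union_le A B
    by_cases hLA' : L ≤ #A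
    · exact ihA hLA'
    · exact ihB (by omega)
  | @union_union A B C a b c hA hB hC hab hac hbc ha hb hc ihA ihB ihC =>
    by_cases hsmall : #(A ∪ B ∪ C) ≤ 3 * L
    · exact ⟨_, .union_union hA hB hC hab hac hbc ha hb hc, hLA, hsmall⟩
    have := card_union_le (A ∪ B) C
    have := card_union_le A B
    by_cases hLA' : L ≤ #A
    · exact ihA hLA'
    by_cases hLB : L ≤ #B
    · exact ihB hLB
    · exact ihC (by omega)

def mergeSpannedGraph (G : SimpleGraph V) : SimpleGraph V where
  Adj u v := u ≠ v ∧ ∃ A, MergeSpanned G A ∧ u ∈ A ∧ v ∈ A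
  symm := ⟨fun _ _ ⟨huv, A, hA, hu, hv⟩ => ⟨huv.symm, A, hA, hv, hu⟩⟩
  loopless := ⟨fun _ h => h.1 rfl⟩

theorem isK4Closed_mergeSpannedGraph : (mergeSpannedGraph G).IsK4Closed := by
  rintro a b c d hab ⟨hac, T₁, h₁, ha₁, hc₁⟩ ⟨had, T₂, h₂, ha₂, hd₂⟩ ⟨hbc, T₃, h₃, hb₃, hc₃⟩
    ⟨hbd, T₄, h₄, hb₄, hd₄⟩ ⟨hcd, T₅, h₅, hc₅, hd₅⟩
  -- `{a, c, d}` and `{b, c, d}` lie in merged sets that share `c` and `d`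
  have hacd := MergeSpanned.union_union h₁ h₂ h₅ hac had hcd
    (mem_inter.mpr ⟨ha₁, ha₂⟩) (mem_inter.mpr ⟨hc₁, hc₅⟩) (mem_inter.mpr ⟨hd₂, hd₅⟩)
  have hbcd := MergeSpanned.union_union h₃ h₄ h₅ hbc hbd hcd
    (mem_inter.mpr ⟨hb₃, hb₄⟩) (mem_inter.mpr ⟨hc₃, hc₅⟩) (mem_inter.mpr ⟨hd₄, hd₅⟩)
  refine ⟨hab, _, .union hacd hbcd hcd ?_ ?_, ?_, ?_⟩ <;> simp [*]

theorem k4Closure_le_mergeSpannedGraph : k4Closure G ≤ mergeSpannedGraph G :=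
  k4Closure_le (fun _ _ h => ⟨h.ne, _, .edge h, by simp, by simp⟩) isK4Closed_mergeSpannedGraph

theorem mergeSpanned_univ [Fintype V] [Nontrivial V] (hG : k4Closure G = ⊤) :
    MergeSpanned G univ := by
  have hcover : ∀ u v : V, u ≠ v → ∃ A, MergeSpanned G A ∧ u ∈ A ∧ v ∈ A := fun u v huv =>
    (k4Closure_le_mergeSpannedGraph (hG ▸ huv : (k4Closure G).Adj u v)).2
  obtain ⟨u₀, v₀, huv₀⟩ := exists_pair_ne V
  obtain ⟨A₀, hA₀, hu₀, hv₀⟩ := hcover u₀ v₀ huv₀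
  obtain ⟨A, hA, hmax⟩ :=
    Set.exists_max_image {A | MergeSpanned G A} card (Set.toFinite _) ⟨A₀, hA₀⟩
  obtain ⟨u, hu, u', hu', huu'⟩ := one_lt_card.mp <|
    (one_lt_card.mpr ⟨u₀, hu₀, v₀, hv₀, huv₀⟩).trans_le (hmax A₀ hA₀)
  -- a largest merge-spanned set absorbs any outside vertex `v` through the sets covering `uv`, `u'v`
  suffices A = univ from this ▸ hA
  refine eq_univ_iff_forall.mpr fun v => ?_
  by_contra hv
  obtain ⟨T, hT, huT, hvT⟩ := hcover u v (ne_of_mem_of_not_mem hu hv)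
  obtain ⟨T', hT', hu'T', hvT'⟩ := hcover u' v (ne_of_mem_of_not_mem hu' hv)
  have hB := MergeSpanned.union_union hA hT hT' huu' (ne_of_mem_of_not_mem hu hv)
    (ne_of_mem_of_not_mem hu' hv) (mem_inter.mpr ⟨hu, huT⟩) (mem_inter.mpr ⟨hu', hu'T'⟩)
    (mem_inter.mpr ⟨hvT, hvT'⟩)
  have hsub : insert v A ⊆ A ∪ T ∪ T' := by
    intro x hx
    rcases mem_insert.mp hx with rfl | hx <;> simp [*]
  have := (card_le_card hsub).trans (hmax _ hB)
  rw [card_insert_of_notMem hv] at this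
  omega

end MergeSpanned

/-- **Lemma 22 (Aizenman–Lebowitz type).** If the `K_4`-bootstrap closure of `G` is `K_n`
and `1 ≤ L ≤ n`, then some set `A` of between `L` and `3L` vertices is internally
spanned by `G`. -/
theorem internally_spanned_intermediate (n L : ℕ) (hL : 1 ≤ L) (hLn : L ≤ n)
    (G : SimpleGraph (Fin n))
    (h : bootClosure (SimpleGraph.completeGraph (Fin 4)) G.edgeSet =
      (⊤ : SimpleGraph (Fin n)).edgeSet) :
    ∃ A : Finset (Fin n), L ≤ A.card ∧ A.card ≤ 3 * L ∧
      IntSpanned G.edgeSet (↑A : Set (Fin n)) := by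
  rcases subsingleton_or_nontrivial (Fin n) with hn | hn
  · have : n ≤ 1 := by simpa using Fintype.card_le_one_iff_subsingleton.mpr hn
    exact ⟨Finset.univ, by simpa using hLn, by rw [Finset.card_univ, Fintype.card_fin]; omega,
      intSpanned_of_subsingleton (Set.subsingleton_of_subsingleton)⟩
  · obtain ⟨A, hA, hLA, hA3L⟩ :=
      (mergeSpanned_univ (percolates_k4_iff_k4Closure_eq_top.mp h)).exists_le_card_le_three_mul hL
        (by simpa using hLn)
    exact ⟨A, hLA, hA3L, hA.intSpanned⟩
end
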